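/- (First atomic label) Let T be an initialised labelled λ_c-term whose external label is the atomic label k, and suppose T →_lcf* T'. If the external label of T', read as a sequence of atomic symbols, is l₁⋯lₙ with n ≥ 1, then l₁ = k. -/
import Mathlib


/-- Exponential markers E ∈ {D, !, ?, R, S, W}. -/
inductive Marker : Type
  | D | bang | quest | R | S | W
deriving DecidableEq, Repr

/-- Labels: α, β ::= a | α·β | overline α | underline α | →E | ←E. -/
inductive Lab : Type
  | atom : ℕ → Lab
  | comp : Lab → Lab → Lab
  | over : Lab → Lab
  | under : Lab → Lab
  | fwd : Marker → Lab
  | bwd : Marker → Lab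
deriving DecidableEq, Repr

/-- Label reversal (·)^r. -/
def Lab.rev : Lab → Lab
  | .atom a => .atom a
  | .comp α β => .comp β.rev α.rev
  | .over α => .over α.rev
  | .under α => .under α.rev
  | .fwd E => .bwd E
  | .bwd E => .fwd E

/-- Labelled λ_c-terms: variables, abstractions and applications carry a label;
δ-, ε- and substitution terms carry no label.  `sub M N x` is M[N/x],
`dup x y z M` is δ_x^{y,z}.M and `eps x M` is ε_x.M. -/
inductive Term : Type
  | var : ℕ → Lab → Term
  | lam : ℕ → Term → Lab → Term
  | app : Term → Term → Lab → Term
  | eps : ℕ → Term → Term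
  | dup : ℕ → ℕ → ℕ → Term → Term
  | sub : Term → Term → ℕ → Term
deriving DecidableEq, Repr

/-- Free variables. -/
def FV : Term → Finset ℕ
  | .var x _ => {x}
  | .lam x M _ => FV M \ {x}
  | .app M N _ => FV M ∪ FV N
  | .eps x M => FV M ∪ {x}
  | .dup x y z M => (FV M \ {y, z}) ∪ {x}
  | .sub M N x => (FV M \ {x}) ∪ FV N

/-- The linearity (variable) constraints on λ_c-terms. -/
def Wf : Term → Prop
  | .var _ _ => True
  | .lam x M _ => x ∈ FV M ∧ Wf M
  | .app M N _ => FV M ∩ FV N = ∅ ∧ Wf M ∧ Wf N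
  | .eps x M => x ∉ FV M ∧ Wf M
  | .dup x y z M => x ∉ FV M ∧ y ≠ z ∧ y ∈ FV M ∧ z ∈ FV M ∧ Wf M
  | .sub M N x => x ∈ FV M ∧ (FV M \ {x}) ∩ FV N = ∅ ∧ Wf M ∧ Wf N

/-- The prefixing operation β • T. -/
def pre (β : Lab) : Term → Term
  | .var x α => .var x (.comp β α)
  | .lam x M α => .lam x M (.comp β α)
  | .app M N α => .app M N (.comp β α)
  | .eps x M => .eps x (pre β M)
  | .dup x y z M => .dup x y z (pre β M)
  | .sub M N x => .sub (pre β M) N x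

/-- The substitution (σ) rules of λ_lcf, applied at the root. -/
inductive SigmaLcf : Term → Term → Prop
  | lam {y M α N x} : FV N = ∅ →
      SigmaLcf (.sub (.lam y M α) N x) (.lam y (.sub M (pre (.fwd .quest) N) x) α)
  | app1 {M N α P x} : x ∈ FV M →
      SigmaLcf (.sub (.app M N α) P x) (.app (.sub M P x) N α)
  | app2 {M N α P x} : x ∈ FV N →
      SigmaLcf (.sub (.app M N α) P x) (.app M (.sub N P x) α)
  | cpy1 {x y z M N} : FV N = ∅ →
      SigmaLcf (.sub (.dup x y z M) N x)
        (.sub (.sub M (pre (.fwd .R) N) y) (pre (.fwd .S) N) z)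
  | cpy2 {x y z M N x'} : x' ≠ x →
      SigmaLcf (.sub (.dup x y z M) N x') (.dup x y z (.sub M N x'))
  | ers1 {x M N} : FV N = ∅ →
      SigmaLcf (.sub (.eps x M) N x) M
  | ers2 {x M N x'} : x' ≠ x →
      SigmaLcf (.sub (.eps x M) N x') (.eps x (.sub M N x'))
  | var {x α N} :
      SigmaLcf (.sub (.var x α) N x) (pre α N)
  | cmp {M P y N x} : x ∈ FV P →
      SigmaLcf (.sub (.sub M P y) N x) (.sub M (.sub P N x) y)

/-- The label →D·α·←! used in the Beta rule of λ_lcf. -/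
def dPhi (α : Lab) : Lab := .comp (.fwd .D) (.comp α (.bwd .bang))

/-- The Beta rule of λ_lcf, applied at the root:
((λx.M)^α N)^β → β·overline(→D·α·←!) • M[underline((→D·α·←!)^r) • N / x],
provided the function part is closed. -/
inductive BetaLcf : Term → Term → Prop
  | beta {x M α N β} : FV (Term.lam x M α) = ∅ →
      BetaLcf (.app (.lam x M α) N β)
        (pre (.comp β (.over (dPhi α)))
          (.sub M (pre (.under (Lab.rev (dPhi α))) N) x))

/-- Closure of a root relation under arbitrary contexts. -/
inductive Ctx (r : Term → Term → Prop) : Term → Term → Prop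
  | base {M N} : r M N → Ctx r M N
  | lam {x M M' α} : Ctx r M M' → Ctx r (.lam x M α) (.lam x M' α)
  | appL {M M' N α} : Ctx r M M' → Ctx r (.app M N α) (.app M' N α)
  | appR {M N N' α} : Ctx r N N' → Ctx r (.app M N α) (.app M N' α)
  | eps {x M M'} : Ctx r M M' → Ctx r (.eps x M) (.eps x M')
  | dup {x y z M M'} : Ctx r M M' → Ctx r (.dup x y z M) (.dup x y z M')
  | subL {M M' N x} : Ctx r M M' → Ctx r (.sub M N x) (.sub M' N x)
  | subR {M N N' x} : Ctx r N N' → Ctx r (.sub M N x) (.sub M N' x)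

/-- One-step σ-reduction of λ_lcf (context closure of the σ-rules). -/
def SigmaStep : Term → Term → Prop := Ctx SigmaLcf

/-- One-step Beta-reduction of λ_lcf (context closure of the Beta rule). -/
def BetaStep : Term → Term → Prop := Ctx BetaLcf

/-- One-step reduction →_lcf. -/
def LcfStep : Term → Term → Prop := Ctx (fun M N => BetaLcf M N ∨ SigmaLcf M N)

/-- The subterm relation. -/
inductive Subterm : Term → Term → Prop
  | refl (t) : Subterm t t
  | lam {s M x α} : Subterm s M → Subterm s (.lam x M α)
  | appL {s M N α} : Subterm s M → Subterm s (.app M N α)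
  | appR {s M N α} : Subterm s N → Subterm s (.app M N α)
  | eps {s x M} : Subterm s M → Subterm s (.eps x M)
  | dup {s x y z M} : Subterm s M → Subterm s (.dup x y z M)
  | subL {s M N x} : Subterm s M → Subterm s (.sub M N x)
  | subR {s M N x} : Subterm s N → Subterm s (.sub M N x)

/-- The external label of a term. -/
def elabel : Term → Lab
  | .var _ α => α
  | .lam _ _ α => α
  | .app _ _ α => α
  | .eps _ M => elabel M
  | .dup _ _ _ M => elabel M
  | .sub M _ _ => elabel M

/-- The list of labels carried by the variable, abstraction and application
subterms of a term. -/
def labelsOf : Term → List Lab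
  | .var _ α => [α]
  | .lam _ M α => α :: labelsOf M
  | .app M N α => α :: (labelsOf M ++ labelsOf N)
  | .eps _ M => labelsOf M
  | .dup _ _ _ M => labelsOf M
  | .sub M N _ => labelsOf M ++ labelsOf N

/-- A term is initialised when every variable, abstraction and application
subterm carries a single atomic label, these atomic labels are pairwise
distinct (hence no exponential markers occur). -/
def Initialised (T : Term) : Prop :=
  (∀ l ∈ labelsOf T, ∃ a, l = Lab.atom a) ∧ (labelsOf T).Nodup

/-- A label read as the sequence of its atomic symbols (atomic labels and
exponential markers), ignoring the over/underline bracketing structure. -/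
def Lab.atoms : Lab → List Lab
  | .atom a => [.atom a]
  | .comp α β => α.atoms ++ β.atoms
  | .over α => α.atoms
  | .under α => α.atoms
  | .fwd E => [.fwd E]
  | .bwd E => [.bwd E]

/-- A label read as the list of its top-level concatenation factors. -/
def Lab.factors : Lab → List Lab
  | .comp α β => α.factors ++ β.factors
  | .atom a => [.atom a]
  | .over α => [.over α]
  | .under α => [.under α]
  | .fwd E => [.fwd E]
  | .bwd E => [.bwd E]

lemma Lab.atoms_ne_nil (α : Lab) : α.atoms ≠ [] := by
  induction α <;> simp [Lab.atoms] <;> simp_all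

lemma elabel_pre (β : Lab) (M : Term) : elabel (pre β M) = .comp β (elabel M) := by
  induction M <;> simp [pre, elabel] <;> assumption

lemma head_comp (β γ : Lab) : (Lab.comp β γ).atoms.head? = β.atoms.head? := by
  simp [Lab.atoms, List.head?_append_of_ne_nil _ (Lab.atoms_ne_nil β)]

lemma root_head {M N : Term} (h : BetaLcf M N ∨ SigmaLcf M N) :
    (elabel N).atoms.head? = (elabel M).atoms.head? := by
  rcases h with h | h
  · cases h with
    | beta hc => simp [elabel, elabel_pre, head_comp]
  · cases h <;> simp [elabel, elabel_pre, head_comp]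

lemma step_head {M N : Term} (h : LcfStep M N) :
    (elabel N).atoms.head? = (elabel M).atoms.head? := by
  induction h with
  | base h => exact root_head h
  | _ => simp [elabel, *]

/-- First atomic label: if T is initialised with external
label the atomic label k and T →_lcf* T', then the first atomic symbol of the
external label of T' is k. -/
theorem lcf_first_atomic_label (T T' : Term) (k : ℕ)
    (hInit : Initialised T) (hk : elabel T = Lab.atom k)
    (hred : Relation.ReflTransGen LcfStep T T') :
    ∀ (l : Lab) (ls : List Lab),
      (elabel T').atoms = l :: ls → l = Lab.atom k := by
  have key : (elabel T').atoms.head? = some (Lab.atom k) := by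
    have : (elabel T').atoms.head? = (elabel T).atoms.head? := by
      induction hred with
      | refl => rfl
      | tail _ h ih => rw [← ih]; exact step_head h
    rw [this, hk]; rfl
  intro l ls hl
  rw [hl] at key
  simpa using key
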